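/- If A and B are central division algebras over a field E whose Schur indices are coprime, then the tensor product A ⊗_E B is a division algebra. -/

import Mathlib

open scoped TensorProduct

/-- `A` is split over `E`: isomorphic to a matrix algebra over `E`. -/
def IsMatrixSplit (E A : Type) [Field E] [Ring A] [Algebra E A] : Prop :=
  ∃ n : ℕ, 0 < n ∧ Nonempty (A ≃ₐ[E] Matrix (Fin n) (Fin n) E)

/-- Brauer equivalence of two `E`-algebras. -/
def BrauerEquiv (E A B : Type) [Field E] [Ring A] [Algebra E A] [Ring B] [Algebra E B] : Prop :=
  ∃ n m : ℕ, 0 < n ∧ 0 < m ∧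
    Nonempty (Matrix (Fin n) (Fin n) A ≃ₐ[E] Matrix (Fin m) (Fin m) B)

/-- Iterated tensor power of an `E`-algebra, as a bundled object. -/
noncomputable def tensorPow (E A : Type) [Field E] [Ring A] [Algebra E A] : ℕ → AlgCat E
  | 0 => AlgCat.of E E
  | n + 1 => AlgCat.of E ((tensorPow E A n) ⊗[E] A)

/-- The exponent of a central simple algebra: the order of its class in the Brauer group,
i.e. the least `k > 0` whose `k`-th tensor power is split (`0` if there is none). -/
noncomputable def brExponent (E A : Type) [Field E] [Ring A] [Algebra E A] : ℕ :=
  sInf {k : ℕ | 0 < k ∧ IsMatrixSplit E (tensorPow E A k)}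

/-- The Schur index of a central simple algebra: the degree of the division algebra
Brauer-equivalent to it. -/
noncomputable def schurIndex (E A : Type) [Field E] [Ring A] [Algebra E A] : ℕ :=
  sInf {d : ℕ | ∃ (D : Type) (_ : DivisionRing D) (_ : Algebra E D),
    FiniteDimensional E D ∧ BrauerEquiv E A D ∧ d * d = Module.finrank E D}

open Module LinearMap Matrix


section Aux

variable (E : Type) [Field E]

/-- If `V` is an `E`-subspace of an `E`-algebra `C` stable under left multiplication by the
image of a finite-dimensional division algebra `A`, then `finrank E A ∣ finrank E V`. -/
theorem aux_dvd_finrank {A C : Type} [DivisionRing A] [Algebra E A]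
    [FiniteDimensional E A] [Ring C] [Algebra E C] (f : A →ₐ[E] C)
    (V : Submodule E C) (hV : ∀ (a : A), ∀ v ∈ V, f a * v ∈ V) :
    finrank E A ∣ finrank E V := by
  letI : SMul A V := ⟨fun a v => ⟨f a * v.1, hV a v.1 v.2⟩⟩
  have hsm : ∀ (a : A) (v : V), ((a • v : V) : C) = f a * (v : C) := fun _ _ => rfl
  letI : Module A V :=
    { one_smul := fun v => Subtype.ext <| by rw [hsm]; simp
      mul_smul := fun a b v => Subtype.ext <| by simp [hsm, mul_assoc]
      smul_add := fun a v w => Subtype.ext <| by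
        simp only [hsm, Submodule.coe_add, mul_add]
      smul_zero := fun a => Subtype.ext <| by simp [hsm]
      add_smul := fun a b v => Subtype.ext <| by
        simp only [hsm, Submodule.coe_add, map_add, add_mul]
      zero_smul := fun v => Subtype.ext <| by simp [hsm] }
  letI : IsScalarTower E A V := ⟨fun e a v => Subtype.ext <| by
    simp only [hsm, SetLike.val_smul]
    rw [Algebra.smul_def e a, _root_.map_mul, AlgHom.commutes, mul_assoc, ← Algebra.smul_def]⟩
  exact ⟨finrank A V, (Module.finrank_mul_finrank E A V).symm⟩

/-- Core argument: if the `E`-dimensions of `A` and `B` are coprime, `A ⊗[E] B` is a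
division ring. -/
theorem aux_tensor_division {A B : Type} [DivisionRing A] [Algebra E A]
    [DivisionRing B] [Algebra E B] [FiniteDimensional E A] [FiniteDimensional E B]
    (hcop : Nat.Coprime (finrank E A) (finrank E B)) :
    ∀ x : A ⊗[E] B, x ≠ 0 → IsUnit x := by
  intro x hx
  have hleft : ∃ y : A ⊗[E] B, y * x = 1 := by
    set V : Submodule E (A ⊗[E] B) := LinearMap.range (LinearMap.mulRight E x) with hVdef
    have hxV : x ∈ V := ⟨1, one_mul x⟩
    have hA : finrank E A ∣ finrank E V := by
      refine aux_dvd_finrank E (Algebra.TensorProduct.includeLeft (S := E)) V ?_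
      rintro a v ⟨y, rfl⟩
      exact ⟨Algebra.TensorProduct.includeLeft (S := E) a * y, by
        simp [LinearMap.mulRight_apply, mul_assoc]⟩
    have hB : finrank E B ∣ finrank E V := by
      refine aux_dvd_finrank E (Algebra.TensorProduct.includeRight) V ?_
      rintro b v ⟨y, rfl⟩
      exact ⟨Algebra.TensorProduct.includeRight b * y, by
        simp [LinearMap.mulRight_apply, mul_assoc]⟩
    have hdvd : finrank E A * finrank E B ∣ finrank E V :=
      hcop.mul_dvd_of_dvd_of_dvd hA hB
    have hC : finrank E (A ⊗[E] B) = finrank E A * finrank E B :=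
      Module.finrank_tensorProduct
    have hpos : 0 < finrank E V := by
      have : Nontrivial V := ⟨⟨⟨x, hxV⟩, 0, by simpa using hx⟩⟩
      exact finrank_pos
    have hle : finrank E V ≤ finrank E A * finrank E B := hC ▸ V.finrank_le
    have heq : finrank E V = finrank E (A ⊗[E] B) :=
      hC ▸ le_antisymm hle (Nat.le_of_dvd hpos hdvd)
    have hVtop : V = ⊤ := Submodule.eq_top_of_finrank_eq heq
    have h1 : (1 : A ⊗[E] B) ∈ V := hVtop ▸ Submodule.mem_top
    obtain ⟨y, hy⟩ := h1
    exact ⟨y, hy⟩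
  obtain ⟨y, hy⟩ := hleft
  have hinj : Function.Injective (LinearMap.mulLeft E x) := by
    intro u v huv
    have h0 : x * (u - v) = 0 := by
      simpa [LinearMap.mulLeft_apply, mul_sub, sub_eq_zero] using huv
    have : u - v = 0 := by
      have := congrArg (y * ·) h0
      simpa [← mul_assoc, hy] using this
    exact sub_eq_zero.mp this
  have hsurj : Function.Surjective (LinearMap.mulLeft E x) :=
    (LinearMap.injective_iff_surjective).mp hinj
  obtain ⟨z, hz⟩ := hsurj 1
  simp only [LinearMap.mulLeft_apply] at hz
  have hzx : z * x = 1 := by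
    have hyz : z = y := by
      calc z = (y * x) * z := by rw [hy, one_mul]
      _ = y * (x * z) := by rw [mul_assoc]
      _ = y := by rw [hz, mul_one]
    rw [hyz, hy]
  exact ⟨⟨x, z, hz, hzx⟩, rfl⟩

end Aux

section Aux2

variable {E : Type} [Field E]


/-- The set of `E`-dimensions of nonzero principal left ideals of an `E`-algebra. -/
def idealDims (E R : Type) [Field E] [Ring R] [Algebra E R] : Set ℕ :=
  {k | ∃ x : R, x ≠ 0 ∧ finrank E (LinearMap.range (LinearMap.mulRight E x)) = k}

theorem idealDims_subset {R R' : Type} [Ring R] [Algebra E R] [Ring R'] [Algebra E R']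
    (e : R ≃ₐ[E] R') : idealDims E R ⊆ idealDims E R' := by
  rintro k ⟨x, hx, rfl⟩
  refine ⟨e x, fun h => hx (by rw [← e.symm_apply_apply x, h, map_zero]), ?_⟩
  have hmap : LinearMap.range (LinearMap.mulRight E (e x)) =
      Submodule.map (e.toLinearEquiv : R →ₗ[E] R')
        (LinearMap.range (LinearMap.mulRight E x)) := by
    ext z
    simp only [LinearMap.mem_range, Submodule.mem_map, LinearMap.mulRight_apply,
      AlgEquiv.toLinearEquiv_apply]
    constructor
    · rintro ⟨y, rfl⟩
      exact ⟨e.symm y * x, ⟨e.symm y, rfl⟩, by simp [_root_.map_mul]⟩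
    · rintro ⟨w, ⟨y, rfl⟩, rfl⟩
      exact ⟨e y, by simp [_root_.map_mul]⟩
  rw [hmap, LinearEquiv.finrank_map_eq]

theorem idealDims_eq {R R' : Type} [Ring R] [Algebra E R] [Ring R'] [Algebra E R']
    (e : R ≃ₐ[E] R') : idealDims E R = idealDims E R' :=
  subset_antisymm (idealDims_subset e) (idealDims_subset e.symm)

variable {A : Type} [DivisionRing A] [Algebra E A] {n : ℕ}

/-- Right `vecMul` by a square matrix, as a left-`A`-linear map on row vectors. -/
def psiA (x : Matrix (Fin n) (Fin n) A) : (Fin n → A) →ₗ[A] (Fin n → A) where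
  toFun r := r ᵥ* x
  map_add' r s := Matrix.add_vecMul x r s
  map_smul' a r := Matrix.smul_vecMul a r x

theorem psiA_apply (x : Matrix (Fin n) (Fin n) A) (r : Fin n → A) : psiA x r = r ᵥ* x := rfl

theorem mulRight_matrix_finrank [FiniteDimensional E A] (x : Matrix (Fin n) (Fin n) A) :
    finrank E (LinearMap.range (LinearMap.mulRight E x)) =
      n * (finrank E A * finrank A (LinearMap.range (psiA x))) := by
  classical
  set p : Submodule A (Fin n → A) := LinearMap.range (psiA x) with hp
  set W : Submodule E (Fin n → A) := p.restrictScalars E with hW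
  have hmem : ∀ y : Matrix (Fin n) (Fin n) A,
      y ∈ LinearMap.range (LinearMap.mulRight E x) → ∀ i, y i ∈ W := by
    rintro _ ⟨z, rfl⟩ i
    refine (Submodule.restrictScalars_mem E p _).mpr ⟨z i, ?_⟩
    show z i ᵥ* x = _
    rw [LinearMap.mulRight_apply, ← Matrix.mul_apply_eq_vecMul]
  let φ : ↥(LinearMap.range (LinearMap.mulRight E x)) →ₗ[E] (Fin n → ↥W) :=
    { toFun := fun y i => ⟨(y : Matrix (Fin n) (Fin n) A) i, hmem _ y.2 i⟩
      map_add' := fun y z => funext fun i => Subtype.ext rfl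
      map_smul' := fun c y => funext fun i => Subtype.ext rfl }
  have hinj : Function.Injective φ := by
    intro y z hyz
    apply Subtype.ext
    funext i
    exact congrArg Subtype.val (congrFun hyz i)
  have hsurj : Function.Surjective φ := by
    intro g
    have h2 : ∀ i, ∃ rr : Fin n → A, rr ᵥ* x = ((g i : Fin n → A)) := fun i =>
      LinearMap.mem_range.mp ((Submodule.restrictScalars_mem E p _).mp (g i).2)
    choose r hr using h2
    refine ⟨⟨Matrix.of r * x, ⟨Matrix.of r, rfl⟩⟩, ?_⟩
    funext i
    apply Subtype.ext
    show (Matrix.of r * x) i = _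
    rw [Matrix.mul_apply_eq_vecMul]
    exact hr i
  have hΦ := (LinearEquiv.ofBijective φ ⟨hinj, hsurj⟩).finrank_eq
  rw [hΦ]
  have h3 : finrank E (Fin n → ↥W) = n * finrank E ↥W := by
    rw [Module.finrank_pi_fintype E, Finset.sum_const, Finset.card_univ, Fintype.card_fin,
      smul_eq_mul]
  rw [h3]
  congr 1
  have h4 : finrank A ↥W = finrank A ↥p :=
    LinearEquiv.finrank_eq (Submodule.restrictScalarsEquiv E A (Fin n → A) p)
  rw [← h4]
  exact (Module.finrank_mul_finrank E A ↥W).symm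

theorem psiA_rank_pos (x : Matrix (Fin n) (Fin n) A) (hx : x ≠ 0) :
    0 < finrank A (LinearMap.range (psiA x)) := by
  have hentry : ∃ i j, x i j ≠ 0 := by
    by_contra hc
    push_neg at hc
    exact hx (by ext i j; exact hc i j)
  obtain ⟨i, j, hij⟩ := hentry
  have hmem : x i ∈ LinearMap.range (psiA x) :=
    ⟨Pi.single i 1, by rw [psiA_apply]; exact Matrix.single_one_vecMul i x⟩
  have : Nontrivial ↥(LinearMap.range (psiA x)) :=
    ⟨⟨⟨x i, hmem⟩, 0, fun hcon =>
      hij (by simpa using congrFun (congrArg Subtype.val hcon) j)⟩⟩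
  exact finrank_pos

theorem psiA_rank_single (hn : 0 < n) :
    finrank A (LinearMap.range (psiA (Matrix.single (⟨0, hn⟩ : Fin n) ⟨0, hn⟩ (1 : A)))) = 1 := by
  classical
  set i0 : Fin n := ⟨0, hn⟩
  set v0 : Fin n → A := Pi.single i0 (1 : A) with hv0
  have hval : ∀ r : Fin n → A,
      psiA (Matrix.single i0 i0 (1 : A)) r = r i0 • v0 := by
    intro r
    funext j
    show (r ᵥ* Matrix.single i0 i0 (1 : A)) j = _
    simp only [hv0, Matrix.vecMul, dotProduct, Matrix.single, Matrix.of_apply,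
      ite_and, mul_ite, mul_one, mul_zero, Pi.smul_apply, Pi.single_apply, smul_eq_mul]
    rw [Finset.sum_ite_eq (Finset.univ : Finset (Fin n)) i0 (fun k => if i0 = j then r k else 0)]
    simp [eq_comm]
  have hrange : LinearMap.range (psiA (Matrix.single i0 i0 (1 : A))) =
      Submodule.span A {v0} := by
    apply le_antisymm
    · rintro _ ⟨r, rfl⟩
      rw [hval r]
      exact Submodule.smul_mem _ _ (Submodule.mem_span_singleton_self _)
    · rw [Submodule.span_le, Set.singleton_subset_iff]
      refine ⟨Pi.single i0 1, ?_⟩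
      rw [hval]
      simp
  rw [hrange]
  exact finrank_span_singleton (by
    intro hcon
    have h := congrFun hcon i0
    rw [hv0] at h
    simp at h)

theorem idealDims_matrix [FiniteDimensional E A] (hn : 0 < n) :
    sInf (idealDims E (Matrix (Fin n) (Fin n) A)) = n * finrank E A := by
  have hwit : (n * finrank E A) ∈ idealDims E (Matrix (Fin n) (Fin n) A) := by
    simp only [idealDims, Set.mem_setOf_eq]
    refine ⟨Matrix.single (⟨0, hn⟩ : Fin n) (⟨0, hn⟩ : Fin n) (1 : A), ?_, ?_⟩
    · intro hcon
      have : Matrix.single (⟨0, hn⟩ : Fin n) (⟨0, hn⟩ : Fin n) (1 : A) (⟨0, hn⟩ : Fin n) (⟨0, hn⟩ : Fin n) = 0 := by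
        rw [hcon]; rfl
      rw [Matrix.single_apply_same] at this
      exact one_ne_zero this
    · rw [mulRight_matrix_finrank, psiA_rank_single hn, mul_one]
  apply le_antisymm
  · exact Nat.sInf_le hwit
  · refine le_csInf ⟨_, hwit⟩ ?_
    rintro k ⟨x, hx, rfl⟩
    rw [mulRight_matrix_finrank]
    have h1 : 0 < finrank A (LinearMap.range (psiA x)) := psiA_rank_pos x hx
    calc n * finrank E A = n * (finrank E A * 1) := by rw [mul_one]
    _ ≤ n * (finrank E A * finrank A (LinearMap.range (psiA x))) :=
        Nat.mul_le_mul_left n (Nat.mul_le_mul_left _ h1)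

end Aux2

section Part3

variable {E : Type} [Field E]

theorem finrank_eq_of_matrix_algEquiv {A D : Type} [DivisionRing A] [Algebra E A]
    [FiniteDimensional E A] [DivisionRing D] [Algebra E D] [FiniteDimensional E D]
    {n m : ℕ} (hn : 0 < n) (hm : 0 < m)
    (e : Matrix (Fin n) (Fin n) A ≃ₐ[E] Matrix (Fin m) (Fin m) D) :
    finrank E D = finrank E A := by
  have h1 : n * finrank E A = m * finrank E D := by
    rw [← idealDims_matrix (E := E) hn, idealDims_eq e, idealDims_matrix hm]
  have h2 : n * n * finrank E A = m * m * finrank E D := by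
    have h := e.toLinearEquiv.finrank_eq
    rwa [Module.finrank_matrix, Module.finrank_matrix, Fintype.card_fin, Fintype.card_fin] at h
  have hα : 0 < finrank E A := finrank_pos
  have hnm : n = m := by
    have h3 : n * (n * finrank E A) = m * (n * finrank E A) := by
      calc n * (n * finrank E A) = n * n * finrank E A := by ring
      _ = m * m * finrank E D := h2
      _ = m * (m * finrank E D) := by ring
      _ = m * (n * finrank E A) := by rw [h1]
    exact Nat.eq_of_mul_eq_mul_right (Nat.mul_pos hn hα) h3
  subst hnm
  exact (Nat.eq_of_mul_eq_mul_left hn h1).symm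

theorem schur_mem_sq {A : Type} [DivisionRing A] [Algebra E A] [FiniteDimensional E A] (d : ℕ)
    (hd : ∃ (D : Type) (_ : DivisionRing D) (_ : Algebra E D),
      FiniteDimensional E D ∧ BrauerEquiv E A D ∧ d * d = Module.finrank E D) :
    d * d = finrank E A := by
  obtain ⟨D, hD1, hD2, hfd, ⟨n, m, hn, hm, ⟨e⟩⟩, hdd⟩ := hd
  exact hdd.trans (finrank_eq_of_matrix_algEquiv hn hm e)

theorem aux_tensor_division' {A B : Type} [DivisionRing A] [Algebra E A]
    [DivisionRing B] [Algebra E B] [FiniteDimensional E A] [FiniteDimensional E B]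
    (hcop : Nat.Coprime (finrank E A) (finrank E B)) :
    ∀ x : A ⊗[E] B, x ≠ 0 → IsUnit x :=
  aux_tensor_division E hcop

end Part3

/-- If `A` and `B` are finite-dimensional central division algebras over `E` with coprime
Schur indices, then `A ⊗[E] B` is a division algebra (every nonzero element is a unit). -/
theorem tensor_of_coprime_indices_isDivision (E A B : Type) [Field E]
    [DivisionRing A] [Algebra E A] [DivisionRing B] [Algebra E B]
    [Algebra.IsCentral E A] [Algebra.IsCentral E B]
    [FiniteDimensional E A] [FiniteDimensional E B]
    (h : Nat.Coprime (schurIndex E A) (schurIndex E B)) :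
    ∀ x : A ⊗[E] B, x ≠ 0 → IsUnit x := by
  have key : Nat.Coprime (finrank E A) (finrank E B) := by
    set SA := {d : ℕ | ∃ (D : Type) (_ : DivisionRing D) (_ : Algebra E D),
      FiniteDimensional E D ∧ BrauerEquiv E A D ∧ d * d = Module.finrank E D} with hSA
    set SB := {d : ℕ | ∃ (D : Type) (_ : DivisionRing D) (_ : Algebra E D),
      FiniteDimensional E D ∧ BrauerEquiv E B D ∧ d * d = Module.finrank E D} with hSB
    have hA : schurIndex E A = sInf SA := rfl
    have hB : schurIndex E B = sInf SB := rfl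
    rw [hA, hB] at h
    by_cases hane : SA.Nonempty
    · by_cases hbne : SB.Nonempty
      · have h1 : sInf SA * sInf SA = finrank E A :=
          schur_mem_sq _ (Nat.sInf_mem hane)
        have h2 : sInf SB * sInf SB = finrank E B :=
          schur_mem_sq _ (Nat.sInf_mem hbne)
        rw [← h1, ← h2]
        exact (h.mul_right h).mul (h.mul_right h)
      · rw [Set.not_nonempty_iff_eq_empty] at hbne
        rw [hbne, Nat.sInf_empty] at h
        have hone : sInf SA = 1 := (Nat.coprime_zero_right _).mp h
        have h1 : sInf SA * sInf SA = finrank E A :=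
          schur_mem_sq _ (Nat.sInf_mem hane)
        rw [hone, one_mul] at h1
        rw [← h1]
        exact Nat.coprime_one_left _
    · rw [Set.not_nonempty_iff_eq_empty] at hane
      rw [hane, Nat.sInf_empty] at h
      have hone : sInf SB = 1 := (Nat.coprime_zero_left _).mp h
      have hbne : SB.Nonempty := by
        by_contra hc
        rw [Set.not_nonempty_iff_eq_empty] at hc
        rw [hc, Nat.sInf_empty] at hone
        exact one_ne_zero hone.symm
      have h2 : sInf SB * sInf SB = finrank E B :=
        schur_mem_sq _ (Nat.sInf_mem hbne)
      rw [hone, one_mul] at h2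
      rw [← h2]
      exact Nat.coprime_one_right _
  exact aux_tensor_division' key
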